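/- Let γ ∈ Q_ε (so γ : [0,1] → BC¹_ℂ(W_{2ε},ℂ^m)_ℝ is 𝓛¹ with ∫₀¹‖γ(s)‖_{BC¹}ds < 1/2). Then the nonautonomous differential equation y′(t) = γ(t)(y(t)) on W_{2ε} satisfies local existence and local uniqueness of Carathéodory solutions; for each y₀ ∈ V_ε the maximal Carathéodory solution with y(0) = y₀ is defined on all of [0,1], takes values in W_ε, and equals t ↦ Ψ^{[γ]}_ε(t)(y₀). -/

import Mathlib

open Set MeasureTheory

/-- `W_ε = (−2−ε, 2+ε)^m + i(−ε,ε)^m ⊆ ℂ^m` (maximum norm on `ℂ^m = Fin m → ℂ`). -/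
def Wset (m : ℕ) (ε : ℝ) : Set (Fin m → ℂ) :=
  {z | ∀ k, |(z k).re| < 2 + ε ∧ |(z k).im| < ε}

/-- `V_ε = (−1−ε/2, 1+ε/2)^m + i(−ε/2, ε/2)^m ⊆ ℂ^m`. -/
def Vset (m : ℕ) (ε : ℝ) : Set (Fin m → ℂ) :=
  {z | ∀ k, |(z k).re| < 1 + ε / 2 ∧ |(z k).im| < ε / 2}

/-- `γ ∈ Q_ε` (see the paper): an `𝓛¹` family `γ : [0,1] → BC¹_ℂ(W_{2ε}, ℂ^m)_ℝ` with
`∫₀¹ ‖γ(s)‖_{BC¹} ds < 1/2`, witnessed by the integrable bound `b`. -/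
def GoodGamma (m : ℕ) (ε : ℝ) (γ : ℝ → (Fin m → ℂ) → (Fin m → ℂ)) (b : ℝ → ℝ) : Prop :=
  (∀ z ∈ Wset m (2 * ε), AEStronglyMeasurable (fun s => γ s z)
      (volume.restrict (Icc (0 : ℝ) 1))) ∧
  (∀ s ∈ Icc (0 : ℝ) 1, DifferentiableOn ℂ (γ s) (Wset m (2 * ε))) ∧
  (∀ s ∈ Icc (0 : ℝ) 1, ∀ z ∈ Wset m (2 * ε),
    (∀ k, (z k).im = 0) → ∀ k, (γ s z k).im = 0) ∧
  IntegrableOn b (Icc (0 : ℝ) 1) ∧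
  (∀ s ∈ Icc (0 : ℝ) 1, ∀ z ∈ Wset m (2 * ε),
    ‖γ s z‖ ≤ b s ∧ ‖fderivWithin ℂ (γ s) (Wset m (2 * ε)) z‖ ≤ b s) ∧
  (∫ s in Icc (0 : ℝ) 1, b s) < 1 / 2

/-- `ζ = Ψ^{[γ]}_ε`: solution of `ζ(t) = id_{V_ε} + ∫₀ᵗ γ(s) ∘ ζ(s) ds` with values in
`Hol_b(V_ε, ℂ^m)_ℝ`, mapping `V_ε` into `closure (W_ε)`. -/
def SolProp (m : ℕ) (ε : ℝ) (γ ζ : ℝ → (Fin m → ℂ) → (Fin m → ℂ)) : Prop :=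
  (∀ z ∈ Vset m ε, ContinuousOn (fun t => ζ t z) (Icc (0 : ℝ) 1)) ∧
  (∀ t ∈ Icc (0 : ℝ) 1, DifferentiableOn ℂ (ζ t) (Vset m ε)) ∧
  (∀ t ∈ Icc (0 : ℝ) 1, ∀ z ∈ Vset m ε, (∀ k, (z k).im = 0) → ∀ k, (ζ t z k).im = 0) ∧
  (∀ t ∈ Icc (0 : ℝ) 1, ∀ z ∈ Vset m ε, ζ t z ∈ closure (Wset m ε)) ∧
  (∀ t ∈ Icc (0 : ℝ) 1, ∀ z ∈ Vset m ε, ζ t z = z + ∫ s in (0 : ℝ)..t, γ s (ζ s z))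

/-! The bound `b` makes `γ(s)` an `L¹`-Lipschitz family on the convex set `W_{2ε}`, so the
Picard operator `η ↦ y₀ + ∫_{t₀}^t γ(s)(η(s)) ds` is a contraction with constant
`∫₀¹ b < 1/2`. On continuous curves in a closed ball around `y₀`, over a time interval on which
`∫ b` is smaller than the radius, Banach's fixed point theorem gives a local solution; at a time
where `‖η₁ - η₂‖` is maximal, the same estimate forces two solutions to agree. For `y₀ ∈ V_ε`
the integral moves real parts by less than `1/2` and, since `γ(s)` is real on real points,
imaginary parts by at most `ε ∫ b < ε/2`, which keeps `Ψ(t)(y₀)` in `W_ε`. -/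

open Filter Topology Interval

theorem aestronglyMeasurable_apply_simpleFunc {α E F : Type*} [MeasurableSpace α]
    {μ : Measure α} [NormedAddCommGroup F] {f : α → E → F} (g : SimpleFunc α E)
    (hf : ∀ c ∈ g.range, AEStronglyMeasurable (f · c) μ) :
    AEStronglyMeasurable (fun x => f x (g x)) μ := by
  have hsum : (fun x => f x (g x)) =
      fun x => ∑ c ∈ g.range, (g ⁻¹' {c}).indicator (f · c) x := by
    funext x
    rw [Finset.sum_eq_single_of_mem (g x) (g.mem_range_self x)]
    · exact (indicator_of_mem rfl _).symm
    · exact fun c _ hc => indicator_of_notMem (Ne.symm hc) _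
  rw [hsum]
  exact Finset.aestronglyMeasurable_fun_sum _ fun c hc =>
    (hf c hc).indicator (g.measurableSet_fiber c)

theorem aestronglyMeasurable_comp_of_continuousOn {α E F : Type*} [MeasurableSpace α]
    {μ : Measure α} [PseudoMetricSpace E] [MeasurableSpace E] [BorelSpace E]
    [NormedAddCommGroup F] {f : α → E → F} {U : Set E} {η : α → E}
    (hη : StronglyMeasurable η) (hηU : ∀ x, η x ∈ U)
    (hf : ∀ z ∈ U, AEStronglyMeasurable (f · z) μ) (hfc : ∀ᵐ x ∂μ, ContinuousOn (f x) U) :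
    AEStronglyMeasurable (fun x => f x (η x)) μ := by
  rcases isEmpty_or_nonempty α with _ | ⟨⟨x₀⟩⟩
  · exact StronglyMeasurable.of_subsingleton_dom.aestronglyMeasurable
  have := hη.isSeparable_range.separableSpace
  set g := SimpleFunc.approxOn η hη.measurable (range η) (η x₀) ⟨x₀, rfl⟩
  have hgU : ∀ n x, g n x ∈ U := fun n x => by
    obtain ⟨y, hy⟩ := SimpleFunc.approxOn_mem hη.measurable (mem_range_self x₀ : η x₀ ∈ range η) n x
    exact hy ▸ hηU y
  refine aestronglyMeasurable_of_tendsto_ae (f := fun n x => f x (g n x)) atTop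
    (fun n => aestronglyMeasurable_apply_simpleFunc (g n) fun c hc => ?_) ?_
  · obtain ⟨x, rfl⟩ := SimpleFunc.mem_range.mp hc
    exact hf _ (hgU n x)
  · filter_upwards [hfc] with x hx
    refine ((hx _ (hηU x)).tendsto).comp (tendsto_nhdsWithin_iff.mpr
      ⟨SimpleFunc.tendsto_approxOn _ _ (subset_closure ⟨x, rfl⟩), Eventually.of_forall (hgU · x)⟩)

theorem norm_intervalIntegral_le_setIntegral {E : Type*} [NormedAddCommGroup E]
    [NormedSpace ℝ E] {F : ℝ → E} {g : ℝ → ℝ} {s : Set ℝ} {a b : ℝ}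
    (hs : MeasurableSet s) (hg : IntegrableOn g s) (hg0 : ∀ x ∈ s, 0 ≤ g x)
    (hab : uIcc a b ⊆ s) (hF : ∀ x ∈ Ι a b, ‖F x‖ ≤ g x) :
    ‖∫ x in a..b, F x‖ ≤ ∫ x in s, g x := by
  rw [intervalIntegral.norm_integral_eq_norm_integral_uIoc]
  calc ‖∫ x in Ι a b, F x‖ ≤ ∫ x in Ι a b, g x :=
        norm_integral_le_of_norm_le (hg.mono_set (uIoc_subset_uIcc.trans hab))
          (ae_restrict_of_forall_mem measurableSet_uIoc hF)
    _ ≤ ∫ x in s, g x :=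
        setIntegral_mono_set hg (ae_restrict_of_forall_mem hs hg0)
          (uIoc_subset_uIcc.trans hab).eventuallyLE

theorem exists_pos_setIntegral_Icc_inter_lt {g : ℝ → ℝ} {s : Set ℝ} (hg : IntegrableOn g s)
    (t₀ : ℝ) {r : ℝ} (hr : 0 < r) : ∃ a > 0, ∫ x in Icc (t₀ - a) (t₀ + a) ∩ s, g x < r := by
  have hlim : Tendsto (fun a => ∫ x in Icc (t₀ - a) (t₀ + a), g x ∂volume.restrict s)
      (𝓝[>] 0) (𝓝 0) :=
    hg.tendsto_setIntegral_nhds_zero ((tendsto_measure_Icc _ t₀).mono_left nhdsWithin_le_nhds)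
  obtain ⟨a, ha, hlt⟩ := ((hlim.eventually (gt_mem_nhds hr)).and self_mem_nhdsWithin).exists
  exact ⟨a, hlt, by rwa [Measure.restrict_restrict measurableSet_Icc] at ha⟩

section Caratheodory

variable {E : Type*} [NormedAddCommGroup E]

structure CaratheodoryBound (f : ℝ → E → E) (U : Set E) (b : ℝ → ℝ) : Prop where
  aestronglyMeasurable : ∀ z ∈ U, AEStronglyMeasurable (f · z) (volume.restrict (Icc 0 1))
  norm_le : ∀ s ∈ Icc (0 : ℝ) 1, ∀ z ∈ U, ‖f s z‖ ≤ b s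
  norm_sub_le : ∀ s ∈ Icc (0 : ℝ) 1, ∀ x ∈ U, ∀ y ∈ U, ‖f s x - f s y‖ ≤ b s * ‖x - y‖
  nonneg : ∀ s ∈ Icc (0 : ℝ) 1, 0 ≤ b s
  integrableOn : IntegrableOn b (Icc 0 1)

noncomputable def picard [NormedSpace ℝ E] (f : ℝ → E → E) (t₀ : ℝ) (y₀ : E) (η : ℝ → E)
    (t : ℝ) : E :=
  y₀ + ∫ s in t₀..t, f s (η s)

namespace CaratheodoryBound

variable {f : ℝ → E → E} {U : Set E} {b : ℝ → ℝ} {α β t₀ t : ℝ} {y₀ : E}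

theorem continuousOn (hf : CaratheodoryBound f U b) {s : ℝ} (hs : s ∈ Icc (0 : ℝ) 1) :
    ContinuousOn (f s) U :=
  (LipschitzOnWith.of_dist_le' (K := b s) fun x hx y hy => by
    simpa only [dist_eq_norm] using hf.norm_sub_le s hs x hx y hy).continuousOn

theorem setIntegral_le (hf : CaratheodoryBound f U b) (hI : Icc α β ⊆ Icc 0 1) :
    ∫ s in Icc α β, b s ≤ ∫ s in Icc (0 : ℝ) 1, b s :=
  setIntegral_mono_set hf.integrableOn (ae_restrict_of_forall_mem measurableSet_Icc hf.nonneg)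
    hI.eventuallyLE

theorem integrableOn_comp [NormedSpace ℝ E] (hf : CaratheodoryBound f U b) (hI : Icc α β ⊆ Icc 0 1)
    {η : ℝ → E} (hη : ContinuousOn η (Icc α β)) (hηU : MapsTo η (Icc α β) U) :
    IntegrableOn (fun s => f s (η s)) (Icc α β) := by
  rcases lt_or_ge β α with hβα | hαβ
  · simp [Icc_eq_empty_of_lt hβα]
  borelize E
  have hext : Continuous fun s => η (projIcc α β hαβ s) :=
    hη.comp_continuous (continuous_subtype_val.comp continuous_projIcc)
      fun s => (projIcc α β hαβ s).2
  have hmeas : AEStronglyMeasurable (fun s => f s (η (projIcc α β hαβ s)))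
      (volume.restrict (Icc α β)) :=
    aestronglyMeasurable_comp_of_continuousOn hext.stronglyMeasurable
      (fun s => hηU (projIcc α β hαβ s).2)
      (fun z hz => (hf.aestronglyMeasurable z hz).mono_measure (Measure.restrict_mono hI le_rfl))
      (ae_restrict_of_forall_mem measurableSet_Icc fun s hs => hf.continuousOn (hI hs))
  refine Integrable.mono' (hf.integrableOn.mono_set hI) (hmeas.congr ?_) ?_
  · filter_upwards [ae_restrict_mem measurableSet_Icc] with s hs
    rw [projIcc_of_mem hαβ hs]
  · filter_upwards [ae_restrict_mem measurableSet_Icc] with s hs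
    exact hf.norm_le s (hI hs) _ (hηU hs)

variable [NormedSpace ℝ E]

theorem norm_integral_comp_le (hf : CaratheodoryBound f U b) (hI : Icc α β ⊆ Icc 0 1)
    (ht₀ : t₀ ∈ Icc α β) (ht : t ∈ Icc α β) {η : ℝ → E} (hηU : MapsTo η (Icc α β) U) :
    ‖∫ s in t₀..t, f s (η s)‖ ≤ ∫ s in Icc α β, b s := by
  have hsub : uIcc t₀ t ⊆ Icc α β := uIcc_subset_Icc ht₀ ht
  refine norm_intervalIntegral_le_setIntegral measurableSet_Icc (hf.integrableOn.mono_set hI)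
    (fun s hs => hf.nonneg s (hI hs)) hsub fun s hs => ?_
  have hs' := hsub (uIoc_subset_uIcc hs)
  exact hf.norm_le s (hI hs') _ (hηU hs')

theorem dist_picard_le (hf : CaratheodoryBound f U b) (hI : Icc α β ⊆ Icc 0 1)
    (ht₀ : t₀ ∈ Icc α β) (ht : t ∈ Icc α β) (y₀ : E) {η₁ η₂ : ℝ → E}
    (hη₁ : ContinuousOn η₁ (Icc α β)) (hη₂ : ContinuousOn η₂ (Icc α β))
    (hη₁U : MapsTo η₁ (Icc α β) U) (hη₂U : MapsTo η₂ (Icc α β) U) {M : ℝ}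
    (hM : ∀ s ∈ Icc α β, ‖η₁ s - η₂ s‖ ≤ M) :
    dist (picard f t₀ y₀ η₁ t) (picard f t₀ y₀ η₂ t) ≤ (∫ s in Icc α β, b s) * M := by
  have hsub : uIcc t₀ t ⊆ Icc α β := uIcc_subset_Icc ht₀ ht
  have hM0 : 0 ≤ M := (norm_nonneg _).trans (hM t₀ ht₀)
  rw [dist_eq_norm, picard, picard, add_sub_add_left_eq_sub,
    ← intervalIntegral.integral_sub
      ((hf.integrableOn_comp hI hη₁ hη₁U).mono_set hsub).intervalIntegrable
      ((hf.integrableOn_comp hI hη₂ hη₂U).mono_set hsub).intervalIntegrable,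
    ← integral_mul_const]
  refine norm_intervalIntegral_le_setIntegral measurableSet_Icc
    ((hf.integrableOn.mono_set hI).mul_const M)
    (fun s hs => mul_nonneg (hf.nonneg s (hI hs)) hM0) hsub fun s hs => ?_
  have hs' := hsub (uIoc_subset_uIcc hs)
  exact (hf.norm_sub_le s (hI hs') _ (hη₁U hs') _ (hη₂U hs')).trans
    (mul_le_mul_of_nonneg_left (hM s hs') (hf.nonneg s (hI hs')))

theorem continuousOn_picard (hf : CaratheodoryBound f U b) (hI : Icc α β ⊆ Icc 0 1)
    (ht₀ : t₀ ∈ Icc α β) (y₀ : E) {η : ℝ → E} (hη : ContinuousOn η (Icc α β))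
    (hηU : MapsTo η (Icc α β) U) : ContinuousOn (picard f t₀ y₀ η) (Icc α β) := by
  have hαβ : α ≤ β := ht₀.1.trans ht₀.2
  have hprim := intervalIntegral.continuousOn_primitive_interval' (μ := volume)
    (f := fun s => f s (η s)) (b₁ := α) (b₂ := β) (a := t₀)
    (by rw [intervalIntegrable_iff_integrableOn_Icc_of_le hαβ]
        exact hf.integrableOn_comp hI hη hηU)
    (by rwa [uIcc_of_le hαβ])
  rw [uIcc_of_le hαβ] at hprim
  exact continuousOn_const.add hprim

theorem exists_eq_picard_Icc [CompleteSpace E] (hf : CaratheodoryBound f U b)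
    (hI : Icc α β ⊆ Icc 0 1) (ht₀ : t₀ ∈ Icc α β) {r : ℝ}
    (hball : Metric.closedBall y₀ r ⊆ U) (hbr : ∫ s in Icc α β, b s ≤ r)
    (hK : ∫ s in Icc α β, b s < 1) :
    ∃ η : ℝ → E, ContinuousOn η (Icc α β) ∧
      ∀ t ∈ Icc α β, η t ∈ Metric.closedBall y₀ r ∧ η t = picard f t₀ y₀ η t := by
  have hαβ : α ≤ β := ht₀.1.trans ht₀.2
  set B := Metric.closedBall y₀ r
  have : CompleteSpace B := Metric.isClosed_closedBall.completeSpace_coe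
  have hK0 : 0 ≤ ∫ s in Icc α β, b s :=
    setIntegral_nonneg measurableSet_Icc fun s hs => hf.nonneg s (hI hs)
  have : Nonempty C(Icc α β, B) :=
    ⟨ContinuousMap.const _ ⟨y₀, Metric.mem_closedBall_self (hK0.trans hbr)⟩⟩
  let curve : C(Icc α β, B) → ℝ → E := fun u => IccExtend hαβ fun x => (u x : E)
  have hcurve : ∀ u, Continuous (curve u) := fun u =>
    (continuous_subtype_val.comp u.continuous).Icc_extend'
  have hcurve_apply : ∀ u t (ht : t ∈ Icc α β), curve u t = u ⟨t, ht⟩ := fun u _ ht =>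
    IccExtend_of_mem _ _ ht
  have hcurveU : ∀ u, MapsTo (curve u) (Icc α β) U := fun u s _ => hball (u _).2
  have hmem : ∀ u (x : Icc α β), picard f t₀ y₀ (curve u) x ∈ B := fun u x => by
    rw [Metric.mem_closedBall, dist_eq_norm, picard, add_sub_cancel_left]
    exact (hf.norm_integral_comp_le hI ht₀ x.2 (hcurveU u)).trans hbr
  let T : C(Icc α β, B) → C(Icc α β, B) := fun u =>
    ⟨fun x => ⟨picard f t₀ y₀ (curve u) x, hmem u x⟩,
      (hf.continuousOn_picard hI ht₀ y₀ (hcurve u).continuousOn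
        (hcurveU u)).domRestrict.subtype_mk _⟩
  have hT : ContractingWith (∫ s in Icc α β, b s).toNNReal T := by
    refine ⟨Real.toNNReal_lt_one.mpr hK, LipschitzWith.of_dist_le' fun u v => ?_⟩
    refine (ContinuousMap.dist_le (mul_nonneg hK0 dist_nonneg)).mpr
      fun x => hf.dist_picard_le hI ht₀ x.2 y₀ (hcurve u).continuousOn (hcurve v).continuousOn
        (hcurveU u) (hcurveU v) fun s hs => ?_
    rw [← dist_eq_norm, hcurve_apply u s hs, hcurve_apply v s hs, ← Subtype.dist_eq]
    exact ContinuousMap.dist_apply_le_dist _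
  set u := ContractingWith.fixedPoint T hT
  refine ⟨curve u, (hcurve u).continuousOn, fun t ht => ?_⟩
  rw [hcurve_apply u t ht]
  exact ⟨(u _).2,
    (congrArg (fun v : C(Icc α β, B) => (v ⟨t, ht⟩ : E)) hT.fixedPoint_isFixedPt).symm⟩

theorem exists_local_eq_picard [CompleteSpace E] (hf : CaratheodoryBound f U b) (hU : IsOpen U)
    (hK : ∫ s in Icc (0 : ℝ) 1, b s < 1) (ht₀ : t₀ ∈ Icc (0 : ℝ) 1) (hy₀ : y₀ ∈ U) :
    ∃ a > 0, ∃ η : ℝ → E, ContinuousOn η (Icc (t₀ - a) (t₀ + a) ∩ Icc 0 1) ∧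
      ∀ t ∈ Icc (t₀ - a) (t₀ + a) ∩ Icc 0 1, η t ∈ U ∧ η t = picard f t₀ y₀ η t := by
  obtain ⟨r, hr, hball⟩ := Metric.nhds_basis_closedBall.mem_iff.mp (hU.mem_nhds hy₀)
  obtain ⟨a, ha, hint⟩ := exists_pos_setIntegral_Icc_inter_lt hf.integrableOn t₀ hr
  refine ⟨a, ha, ?_⟩
  rw [Icc_inter_Icc] at hint ⊢
  have hI : Icc ((t₀ - a) ⊔ 0) ((t₀ + a) ⊓ 1) ⊆ Icc 0 1 :=
    Icc_subset_Icc le_sup_right inf_le_right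
  have ht₀' : t₀ ∈ Icc ((t₀ - a) ⊔ 0) ((t₀ + a) ⊓ 1) :=
    ⟨max_le (by linarith) ht₀.1, le_min (by linarith) ht₀.2⟩
  obtain ⟨η, hη, hηeq⟩ :=
    hf.exists_eq_picard_Icc hI ht₀' hball hint.le ((hf.setIntegral_le hI).trans_lt hK)
  exact ⟨η, hη, fun t ht => ⟨hball (hηeq t ht).1, (hηeq t ht).2⟩⟩

theorem eq_of_eq_picard_uIcc (hf : CaratheodoryBound f U b) (hK : ∫ s in Icc (0 : ℝ) 1, b s < 1)
    {t : ℝ} (hI : uIcc t₀ t ⊆ Icc 0 1) {η₁ η₂ : ℝ → E}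
    (hη₁ : ContinuousOn η₁ (uIcc t₀ t)) (hη₂ : ContinuousOn η₂ (uIcc t₀ t))
    (hη₁U : MapsTo η₁ (uIcc t₀ t) U) (hη₂U : MapsTo η₂ (uIcc t₀ t) U)
    (h₁ : ∀ s ∈ uIcc t₀ t, η₁ s = picard f t₀ y₀ η₁ s)
    (h₂ : ∀ s ∈ uIcc t₀ t, η₂ s = picard f t₀ y₀ η₂ s) : η₁ t = η₂ t := by
  obtain ⟨w, hw, hmax⟩ :=
    isCompact_uIcc.exists_isMaxOn nonempty_uIcc (hη₁.sub hη₂).norm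
  have hK' : ∫ s in uIcc t₀ t, b s < 1 := (hf.setIntegral_le hI).trans_lt hK
  have hle : ‖η₁ w - η₂ w‖ ≤ (∫ s in uIcc t₀ t, b s) * ‖η₁ w - η₂ w‖ :=
    calc ‖η₁ w - η₂ w‖ = dist (picard f t₀ y₀ η₁ w) (picard f t₀ y₀ η₂ w) := by
          rw [dist_eq_norm, ← h₁ w hw, ← h₂ w hw]
      _ ≤ _ := hf.dist_picard_le hI left_mem_uIcc hw y₀ hη₁ hη₂ hη₁U hη₂U fun s hs => hmax hs
  have hw0 : ‖η₁ w - η₂ w‖ ≤ 0 := by nlinarith [norm_nonneg (η₁ w - η₂ w)]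
  exact sub_eq_zero.mp (norm_le_zero_iff.mp ((hmax right_mem_uIcc).trans hw0))

theorem eqOn_of_eq_picard (hf : CaratheodoryBound f U b) (hK : ∫ s in Icc (0 : ℝ) 1, b s < 1)
    {J : Set ℝ} (hJ : J ⊆ Icc 0 1) (ht₀ : t₀ ∈ J) (hJc : J.OrdConnected) {η₁ η₂ : ℝ → E}
    (hη₁ : ContinuousOn η₁ J) (hη₂ : ContinuousOn η₂ J)
    (hη₁U : MapsTo η₁ J U) (hη₂U : MapsTo η₂ J U)
    (h₁ : ∀ s ∈ J, η₁ s = picard f t₀ y₀ η₁ s) (h₂ : ∀ s ∈ J, η₂ s = picard f t₀ y₀ η₂ s) :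
    EqOn η₁ η₂ J := fun t ht =>
  have hsub : uIcc t₀ t ⊆ J := hJc.uIcc_subset ht₀ ht
  hf.eq_of_eq_picard_uIcc hK (hsub.trans hJ) (hη₁.mono hsub) (hη₂.mono hsub)
    (hη₁U.mono_left hsub) (hη₂U.mono_left hsub) (fun s hs => h₁ s (hsub hs))
    (fun s hs => h₂ s (hsub hs))

end CaratheodoryBound

end Caratheodory

section Boxes

variable {m : ℕ} {ε : ℝ}

theorem Wset_eq_pi :
    Wset m ε = univ.pi fun _ => Ioo (-(2 + ε)) (2 + ε) ×ℂ Ioo (-ε) ε := by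
  ext z
  simp [Wset, Complex.mem_reProdIm, abs_lt]

theorem isOpen_Wset : IsOpen (Wset m ε) := by
  rw [Wset_eq_pi]
  exact isOpen_set_pi finite_univ fun _ _ => isOpen_Ioo.reProdIm isOpen_Ioo

theorem convex_Wset : Convex ℝ (Wset m ε) := by
  rw [Wset_eq_pi]
  exact convex_pi fun _ _ => by
    exact ((convex_Ioo _ _).prod (convex_Ioo _ _)).linear_preimage
      Complex.equivRealProdLm.toLinearMap

theorem zero_mem_Wset (hε : 0 < ε) : (0 : Fin m → ℂ) ∈ Wset m ε := fun _ => by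
  simp only [Pi.zero_apply, Complex.zero_re, Complex.zero_im, abs_zero]
  constructor <;> linarith

theorem abs_le_of_mem_closure_Wset {w : Fin m → ℂ} (hw : w ∈ closure (Wset m ε)) (k : Fin m) :
    |(w k).re| ≤ 2 + ε ∧ |(w k).im| ≤ ε := by
  have hbox : closure (Wset m ε) ⊆ univ.pi fun _ => Icc (-(2 + ε)) (2 + ε) ×ℂ Icc (-ε) ε := by
    rw [Wset_eq_pi]
    exact closure_minimal (pi_mono fun _ _ => Complex.reProdIm_subset_iff.mpr
        (prod_mono Ioo_subset_Icc_self Ioo_subset_Icc_self))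
      (isClosed_set_pi fun _ _ => isClosed_Icc.reProdIm isClosed_Icc)
  have := hbox hw k (mem_univ k)
  rw [Complex.mem_reProdIm] at this
  exact ⟨abs_le.mpr this.1, abs_le.mpr this.2⟩

theorem closure_Wset_subset (hε : 0 < ε) : closure (Wset m ε) ⊆ Wset m (2 * ε) :=
  fun _ hw k => ⟨(abs_le_of_mem_closure_Wset hw k).1.trans_lt (by linarith),
    (abs_le_of_mem_closure_Wset hw k).2.trans_lt (by linarith)⟩

theorem add_mem_Wset {y₀ I : Fin m → ℂ} (hy₀ : y₀ ∈ Vset m ε) (hI : ‖I‖ < 1 / 2)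
    (hIm : ∀ k, |(I k).im| < ε / 2) : y₀ + I ∈ Wset m ε := fun k => by
  have hre : |(I k).re| < 1 / 2 :=
    (Complex.abs_re_le_norm _).trans_lt ((norm_le_pi_norm I k).trans_lt hI)
  have hε : 0 < ε := by linarith [abs_nonneg (y₀ k).im, (hy₀ k).2]
  simp only [Pi.add_apply, Complex.add_re, Complex.add_im]
  constructor
  · linarith [abs_add_le (y₀ k).re (I k).re, (hy₀ k).1]
  · linarith [abs_add_le (y₀ k).im (I k).im, (hy₀ k).2, hIm k]

end Boxes

namespace GoodGamma

variable {m : ℕ} {ε : ℝ} {γ : ℝ → (Fin m → ℂ) → (Fin m → ℂ)} {b : ℝ → ℝ}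

theorem caratheodoryBound (hε : 0 < ε) (hγ : GoodGamma m ε γ b) :
    CaratheodoryBound γ (Wset m (2 * ε)) b := by
  obtain ⟨hmeas, hdiff, -, hint, hbound, -⟩ := hγ
  exact {
    aestronglyMeasurable := hmeas
    norm_le := fun s hs z hz => (hbound s hs z hz).1
    norm_sub_le := fun s hs x hx y hy => convex_Wset.norm_image_sub_le_of_norm_fderivWithin_le
      (hdiff s hs) (fun z hz => (hbound s hs z hz).2) hy hx
    nonneg := fun s hs => (norm_nonneg _).trans (hbound s hs 0 (zero_mem_Wset (by linarith))).1
    integrableOn := hint }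

theorem abs_im_le (hε : 0 < ε) (hγ : GoodGamma m ε γ b) {s : ℝ} (hs : s ∈ Icc (0 : ℝ) 1)
    {w : Fin m → ℂ} (hw : w ∈ closure (Wset m ε)) (k : Fin m) :
    |(γ s w k).im| ≤ b s * ε := by
  have hf := hγ.caratheodoryBound hε
  obtain ⟨-, -, hreal, -⟩ := hγ
  set w' : Fin m → ℂ := fun k => ((w k).re : ℂ)
  have hw' : w' ∈ Wset m (2 * ε) := fun k => by
    simp only [w', Complex.ofReal_re, Complex.ofReal_im, abs_zero]
    exact ⟨(abs_le_of_mem_closure_Wset hw k).1.trans_lt (by linarith), by linarith⟩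
  have hdist : ‖w - w'‖ ≤ ε := (pi_norm_le_iff_of_nonneg hε.le).mpr fun k => by
    have him : (w - w') k = (w k).im * Complex.I :=
      sub_eq_iff_eq_add'.mpr (Complex.re_add_im (w k)).symm
    rw [him, norm_mul, Complex.norm_I, mul_one, Complex.norm_real, Real.norm_eq_abs]
    exact (abs_le_of_mem_closure_Wset hw k).2
  calc |(γ s w k).im| = |(γ s w k - γ s w' k).im| := by
        rw [Complex.sub_im, hreal s hs w' hw' (fun _ => Complex.ofReal_im _) k, sub_zero]
    _ ≤ ‖γ s w - γ s w'‖ :=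
        (Complex.abs_im_le_norm _).trans (norm_le_pi_norm (γ s w - γ s w') k)
    _ ≤ b s * ‖w - w'‖ := hf.norm_sub_le s hs w (closure_Wset_subset hε hw) w' hw'
    _ ≤ b s * ε := mul_le_mul_of_nonneg_left hdist (hf.nonneg s hs)

theorem add_integral_mem_Wset (hε : 0 < ε) (hγ : GoodGamma m ε γ b) {η : ℝ → Fin m → ℂ}
    (hη : ContinuousOn η (Icc 0 1)) (hηW : ∀ s ∈ Icc (0 : ℝ) 1, η s ∈ closure (Wset m ε))
    {y₀ : Fin m → ℂ} (hy₀ : y₀ ∈ Vset m ε) {t : ℝ} (ht : t ∈ Icc (0 : ℝ) 1) :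
    y₀ + ∫ s in (0 : ℝ)..t, γ s (η s) ∈ Wset m ε := by
  have hf := hγ.caratheodoryBound hε
  have hhalf : ∫ s in Icc (0 : ℝ) 1, b s < 1 / 2 := hγ.2.2.2.2.2
  have hηU : MapsTo η (Icc 0 1) (Wset m (2 * ε)) := fun s hs => closure_Wset_subset hε (hηW s hs)
  have h0 : (0 : ℝ) ∈ Icc (0 : ℝ) 1 := left_mem_Icc.mpr zero_le_one
  have hsub : uIcc 0 t ⊆ Icc 0 1 := uIcc_subset_Icc h0 ht
  refine add_mem_Wset hy₀ ((hf.norm_integral_comp_le subset_rfl h0 ht hηU).trans_lt hhalf)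
    fun k => ?_
  let L : (Fin m → ℂ) →L[ℝ] ℝ := Complex.imCLM.comp (ContinuousLinearMap.proj k)
  have hcomm : ∫ s in (0 : ℝ)..t, L (γ s (η s)) = L (∫ s in (0 : ℝ)..t, γ s (η s)) :=
    L.intervalIntegral_comp_comm ((hf.integrableOn_comp subset_rfl hη hηU).mono_set
      hsub).intervalIntegrable
  calc |((∫ s in (0 : ℝ)..t, γ s (η s)) k).im| = ‖∫ s in (0 : ℝ)..t, L (γ s (η s))‖ := by
        rw [hcomm, Real.norm_eq_abs]; rfl
    _ ≤ ∫ s in Icc (0 : ℝ) 1, b s * ε :=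
        norm_intervalIntegral_le_setIntegral measurableSet_Icc (hf.integrableOn.mul_const ε)
          (fun s hs => mul_nonneg (hf.nonneg s hs) hε.le) hsub fun s hs =>
            hγ.abs_im_le hε (hsub (uIoc_subset_uIcc hs)) (hηW _ (hsub (uIoc_subset_uIcc hs))) k
    _ < ε / 2 := by rw [integral_mul_const]; nlinarith [hhalf]

end GoodGamma

/-- Lemma `local-lem` (d): for `γ ∈ Q_ε`, the differential equation `y'(t) = γ(t)(y(t))`
on `W_{2ε}` satisfies local existence and local uniqueness of Carathéodory solutions
(expressed via the equivalent integral equations); for each `y₀ ∈ V_ε` the maximal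
Carathéodory solution with `y(0) = y₀` is defined on all of `[0,1]`, takes values in
`W_ε`, and is given by `t ↦ Ψ^{[γ]}_ε(t)(y₀)`. -/
theorem caratheodory_local_flow (m : ℕ) (ε : ℝ) (hε : 0 < ε)
    (γ : ℝ → (Fin m → ℂ) → (Fin m → ℂ)) (b : ℝ → ℝ) (hγ : GoodGamma m ε γ b)
    (ζ : ℝ → (Fin m → ℂ) → (Fin m → ℂ)) (hζ : SolProp m ε γ ζ) :
    -- local existence of Carathéodory solutions
    (∀ t₀ ∈ Icc (0 : ℝ) 1, ∀ y₀ ∈ Wset m (2 * ε), ∃ a > (0 : ℝ),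
      ∃ η : ℝ → Fin m → ℂ, ContinuousOn η (Icc (t₀ - a) (t₀ + a) ∩ Icc 0 1) ∧
        ∀ t ∈ Icc (t₀ - a) (t₀ + a) ∩ Icc 0 1,
          η t ∈ Wset m (2 * ε) ∧ η t = y₀ + ∫ s in t₀..t, γ s (η s)) ∧
    -- local (indeed global) uniqueness of Carathéodory solutions
    (∀ t₀ ∈ Icc (0 : ℝ) 1, ∀ (J : Set ℝ), J ⊆ Icc 0 1 → t₀ ∈ J → J.OrdConnected →
      ∀ η₁ η₂ : ℝ → Fin m → ℂ, ContinuousOn η₁ J → ContinuousOn η₂ J →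
        (∀ t ∈ J, η₁ t ∈ Wset m (2 * ε) ∧ η₁ t = η₁ t₀ + ∫ s in t₀..t, γ s (η₁ s)) →
        (∀ t ∈ J, η₂ t ∈ Wset m (2 * ε) ∧ η₂ t = η₂ t₀ + ∫ s in t₀..t, γ s (η₂ s)) →
        η₁ t₀ = η₂ t₀ → Set.EqOn η₁ η₂ J) ∧
    -- for y₀ ∈ V_ε the maximal solution with y(0) = y₀ exists on [0,1], has values in
    -- W_ε and is t ↦ Ψ^{[γ]}_ε(t)(y₀)
    ∀ y₀ ∈ Vset m ε, ∀ t ∈ Icc (0 : ℝ) 1,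
      ζ t y₀ ∈ Wset m ε ∧ ζ t y₀ = y₀ + ∫ s in (0 : ℝ)..t, γ s (ζ s y₀) := by
  have hf := hγ.caratheodoryBound hε
  have hK : ∫ s in Icc (0 : ℝ) 1, b s < 1 := hγ.2.2.2.2.2.trans one_half_lt_one
  obtain ⟨hζc, -, -, hζW, hζeq⟩ := hζ
  refine ⟨fun t₀ ht₀ y₀ hy₀ => hf.exists_local_eq_picard isOpen_Wset hK ht₀ hy₀,
    fun t₀ _ J hJ ht₀ hJc η₁ η₂ hη₁ hη₂ h₁ h₂ h₀ => ?_, fun y₀ hy₀ t ht => ?_⟩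
  · refine hf.eqOn_of_eq_picard hK hJ ht₀ hJc hη₁ hη₂ (fun t ht => (h₁ t ht).1)
      (fun t ht => (h₂ t ht).1) (fun t ht => (h₁ t ht).2) fun t ht => ?_
    rw [h₀]
    exact (h₂ t ht).2
  · refine ⟨?_, hζeq t ht y₀ hy₀⟩
    rw [hζeq t ht y₀ hy₀]
    exact hγ.add_integral_mem_Wset hε (hζc y₀ hy₀) (fun s hs => hζW s hs y₀ hy₀) hy₀ ht
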